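/- There exists a numerical constant C > 0 such that for every standard Gaussian random vector g ~ N(0, I_M) in ℝ^M and every τ ≥ √(2M), the expected squared positive excess of the norm satisfies E[ (max{‖g‖₂ − τ, 0})² ] ≤ C · exp(−(τ − √(2M))²/2). -/

import Mathlib

open MeasureTheory ProbabilityTheory

noncomputable section

/-- Euclidean inner product on `ι → ℝ`. -/
def dotp {ι : Type*} [Fintype ι] (x y : ι → ℝ) : ℝ := ∑ i, x i * y i

/-- Euclidean norm on `ι → ℝ`. -/
def enorm2 {ι : Type*} [Fintype ι] (x : ι → ℝ) : ℝ := Real.sqrt (∑ i, (x i) ^ 2)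

/-- ℓ¹ norm on `ι → ℝ`. -/
def l1norm {ι : Type*} [Fintype ι] (x : ι → ℝ) : ℝ := ∑ i, |x i|

/-- ℓ_{1,2} norm of a matrix, given as a function on pairs (row, column). -/
def l12norm {n M : ℕ} (X : Fin n × Fin M → ℝ) : ℝ :=
  ∑ l : Fin n, Real.sqrt (∑ j : Fin M, (X (l, j)) ^ 2)

/-- The sub-Gaussian norm `‖X‖_{ψ₂} = sup_{p ≥ 1} p^{-1/2} (E|X|^p)^{1/p}`. -/
def sgNorm {Ω : Type*} [MeasurableSpace Ω] (P : Measure Ω) (X : Ω → ℝ) : ℝ :=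
  ⨆ p : {p : ℝ // 1 ≤ p}, p.1 ^ (-(2:ℝ)⁻¹) * (∫ ω, |X ω| ^ p.1 ∂P) ^ p.1⁻¹

/-- `X` is sub-Gaussian: the family defining the ψ₂-norm is bounded above. -/
def IsSubG {Ω : Type*} [MeasurableSpace Ω] (P : Measure Ω) (X : Ω → ℝ) : Prop :=
  BddAbove (Set.range fun p : {p : ℝ // 1 ≤ p} =>
    p.1 ^ (-(2:ℝ)⁻¹) * (∫ ω, |X ω| ^ p.1 ∂P) ^ p.1⁻¹)

/-- The sub-Gaussian norm of a random vector, `sup_{‖x‖₂ = 1} ‖⟨a, x⟩‖_{ψ₂}`. -/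
def sgNormVec {Ω ι : Type*} [MeasurableSpace Ω] [Fintype ι] (P : Measure Ω)
    (a : Ω → ι → ℝ) : ℝ :=
  ⨆ x : {x : ι → ℝ // enorm2 x = 1}, sgNorm P fun ω => dotp (a ω) x.1

/-- A random vector is isotropic if `E[a aᵀ] = Id`. -/
def Isotropic {Ω ι : Type*} [MeasurableSpace Ω] [Fintype ι] [DecidableEq ι]
    (P : Measure Ω) (a : Ω → ι → ℝ) : Prop :=
  ∀ k l, ∫ ω, a ω k * a ω l ∂P = if k = l then 1 else 0

/-- The standard Gaussian measure `N(0, Id)` on `ι → ℝ`. -/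
def stdGaussian (ι : Type*) [Fintype ι] : Measure (ι → ℝ) :=
  Measure.pi fun _ => gaussianReal 0 1

/-- Gaussian mean width `w(L) = E[sup_{h ∈ L} ⟨g, h⟩]`. -/
def meanWidth {ι : Type*} [Fintype ι] (L : Set (ι → ℝ)) : ℝ :=
  ∫ g, sSup ((fun h => dotp g h) '' L) ∂(stdGaussian ι)

/-- The cone of `L` at `x`. -/
def coneAt {ι : Type*} [Fintype ι] (L : Set (ι → ℝ)) (x : ι → ℝ) : Set (ι → ℝ) :=
  {v | ∃ c : ℝ, 0 ≤ c ∧ ∃ h ∈ L, v = c • (h - x)}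

/-- The Euclidean sphere of radius `t`. -/
def sphR (ι : Type*) [Fintype ι] (t : ℝ) : Set (ι → ℝ) := {x | enorm2 x = t}

/-- Conic mean width `w₁(cone(L, x)) = w(cone(L,x) ∩ S^{d-1})`. -/
def conicWidth {ι : Type*} [Fintype ι] (L : Set (ι → ℝ)) (x : ι → ℝ) : ℝ :=
  meanWidth (coneAt L x ∩ sphR ι 1)

/-- Local mean width at scale `t`: `w_t(L) = w(L ∩ t S^{d-1})`. -/
def localWidth {ι : Type*} [Fintype ι] (L : Set (ι → ℝ)) (t : ℝ) : ℝ :=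
  meanWidth (L ∩ sphR ι t)

end

/-!
Chernoff's method applied to `‖g‖²`: for `1/4 ≤ λ < 1/2` one has `(s - τ)₊² ≤ 4 exp (λ (s² - τ²))`,
and `E exp (λ ‖g‖²) = (1 - 2λ)^(-M/2)` factorises over the coordinates. Taking `1 - 2λ = M / τ²`
and using `x ≤ exp (x - 1)` for `x = τ / √M` gives the bound `4 exp (-(τ - √M)² / 2)`, which is
even stronger than the claim since `√M ≤ √(2M) ≤ τ`.
-/

open Real
open scoped NNReal

section GaussianSquareMGF

variable {v : ℝ≥0} {c : ℝ}

lemma integrable_gaussianReal_iff_integrable_smul {E : Type*} [NormedAddCommGroup E]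
    [NormedSpace ℝ E] {μ : ℝ} {f : ℝ → E} (hv : v ≠ 0) :
    Integrable f (gaussianReal μ v) ↔ Integrable (fun x => gaussianPDFReal μ v x • f x) := by
  rw [gaussianReal_of_var_ne_zero _ hv, integrable_withDensity_iff_integrable_smul'
    (measurable_gaussianPDF _ _) (ae_of_all _ fun _ => gaussianPDF_lt_top)]
  simp only [gaussianPDF_def, ENNReal.toReal_ofReal (gaussianPDFReal_nonneg _ _ _)]

lemma gaussianPDFReal_zero_smul_exp_mul_sq (v : ℝ≥0) (c x : ℝ) :
    gaussianPDFReal 0 v x • exp (c * x ^ 2)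
      = (√(2 * π * v))⁻¹ * exp (-((2 * (v : ℝ))⁻¹ - c) * x ^ 2) := by
  rw [gaussianPDFReal, smul_eq_mul, mul_assoc, ← exp_add]
  ring_nf

lemma integrable_exp_mul_sq_gaussianReal (hv : v ≠ 0) (hc : 2 * c * v < 1) :
    Integrable (fun x => exp (c * x ^ 2)) (gaussianReal 0 v) := by
  rw [integrable_gaussianReal_iff_integrable_smul hv]
  simp only [gaussianPDFReal_zero_smul_exp_mul_sq]
  refine (integrable_exp_neg_mul_sq ?_).const_mul _
  rw [show (2 * (v : ℝ))⁻¹ - c = (1 - 2 * c * v) / (2 * v) by field_simp]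
  exact div_pos (by linarith) (by positivity)

lemma integral_exp_mul_sq_gaussianReal (hv : v ≠ 0) (hc : 2 * c * v < 1) :
    ∫ x, exp (c * x ^ 2) ∂gaussianReal 0 v = (√(1 - 2 * c * v))⁻¹ := by
  rw [integral_gaussianReal_eq_integral_smul hv]
  simp only [gaussianPDFReal_zero_smul_exp_mul_sq]
  rw [integral_const_mul, integral_gaussian, ← sqrt_inv, ← sqrt_mul (by positivity),
    ← sqrt_inv]
  have : (1 : ℝ) - 2 * c * v ≠ 0 := by linarith
  congr 1
  field_simp

end GaussianSquareMGF

section StdGaussian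

variable {ι : Type*} [Fintype ι]

lemma sq_enorm2 (x : ι → ℝ) : enorm2 x ^ 2 = ∑ i, x i ^ 2 :=
  sq_sqrt (by positivity)

lemma exp_mul_sq_enorm2 (c : ℝ) (x : ι → ℝ) :
    exp (c * enorm2 x ^ 2) = ∏ i, exp (c * x i ^ 2) := by
  rw [sq_enorm2, Finset.mul_sum, exp_sum]

lemma integrable_exp_mul_sq_enorm2_stdGaussian {c : ℝ} (hc : c < 1 / 2) :
    Integrable (fun x => exp (c * enorm2 x ^ 2)) (stdGaussian ι) := by
  simp only [exp_mul_sq_enorm2]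
  exact Integrable.fintype_prod fun _ =>
    integrable_exp_mul_sq_gaussianReal one_ne_zero (by push_cast; linarith)

lemma integral_exp_mul_sq_enorm2_stdGaussian {c : ℝ} (hc : c < 1 / 2) :
    ∫ x, exp (c * enorm2 x ^ 2) ∂stdGaussian ι = (√(1 - 2 * c))⁻¹ ^ Fintype.card ι := by
  simp only [exp_mul_sq_enorm2]
  rw [_root_.stdGaussian, integral_fintype_prod_eq_pow fun t => exp (c * t ^ 2),
    integral_exp_mul_sq_gaussianReal one_ne_zero (by push_cast; linarith), NNReal.coe_one,
    mul_one]

end StdGaussian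

lemma sq_max_sub_zero_le_four_mul_exp {lam τ : ℝ} (hlam : 1 / 4 ≤ lam) (hτ : 0 ≤ τ) (s : ℝ) :
    max (s - τ) 0 ^ 2 ≤ 4 * exp (lam * (s ^ 2 - τ ^ 2)) := by
  rcases le_or_gt s τ with hs | hs
  · rw [max_eq_right (by linarith), zero_pow two_ne_zero]
    positivity
  · rw [max_eq_left (by linarith)]
    have hsq : (s - τ) ^ 2 / 4 ≤ lam * (s ^ 2 - τ ^ 2) := by
      nlinarith [mul_nonneg (sub_nonneg.2 hs.le) hτ]
    nlinarith [add_one_le_exp (lam * (s ^ 2 - τ ^ 2))]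

lemma integral_sq_max_enorm2_sub_le {ι : Type*} [Fintype ι] {lam τ : ℝ}
    (hlam₁ : 1 / 4 ≤ lam) (hlam₂ : lam < 1 / 2) (hτ : 0 ≤ τ) :
    ∫ g, max (enorm2 g - τ) 0 ^ 2 ∂stdGaussian ι
      ≤ 4 * exp (-(lam * τ ^ 2)) * (√(1 - 2 * lam))⁻¹ ^ Fintype.card ι := by
  have hbound (g : ι → ℝ) :
      max (enorm2 g - τ) 0 ^ 2 ≤ 4 * exp (-(lam * τ ^ 2)) * exp (lam * enorm2 g ^ 2) := by
    rw [mul_assoc, ← exp_add, neg_add_eq_sub, ← mul_sub]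
    exact sq_max_sub_zero_le_four_mul_exp hlam₁ hτ _
  calc ∫ g, max (enorm2 g - τ) 0 ^ 2 ∂stdGaussian ι
      ≤ ∫ g, 4 * exp (-(lam * τ ^ 2)) * exp (lam * enorm2 g ^ 2) ∂stdGaussian ι :=
        integral_mono_of_nonneg (ae_of_all _ fun _ => by positivity)
          ((integrable_exp_mul_sq_enorm2_stdGaussian hlam₂).const_mul _) (ae_of_all _ hbound)
    _ = 4 * exp (-(lam * τ ^ 2)) * (√(1 - 2 * lam))⁻¹ ^ Fintype.card ι := by
        rw [integral_const_mul, integral_exp_mul_sq_enorm2_stdGaussian hlam₂]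

lemma div_sqrt_pow_mul_exp_le (n : ℕ) {τ : ℝ} (hτ : 0 ≤ τ) :
    (τ / √n) ^ n * exp (-(τ ^ 2 - n) / 2) ≤ exp (-(τ - √n) ^ 2 / 2) := by
  have hpow : (τ / √n) ^ n ≤ exp (√n * τ - n) := by
    have hmul : (n : ℝ) * (τ / √n - 1) = √n * τ - n := by
      rcases n.eq_zero_or_pos with rfl | _
      · simp
      · field_simp
        linear_combination (-τ) * sq_sqrt n.cast_nonneg
    calc (τ / √n) ^ n ≤ exp (τ / √n - 1) ^ n := by
          gcongr
          linarith [add_one_le_exp (τ / √n - 1)]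
      _ = exp (√n * τ - n) := by rw [← exp_nat_mul, hmul]
  calc (τ / √n) ^ n * exp (-(τ ^ 2 - n) / 2)
      ≤ exp (√n * τ - n) * exp (-(τ ^ 2 - n) / 2) := by gcongr
    _ = exp (-(τ - √n) ^ 2 / 2) := by
        rw [← exp_add]
        congr 1
        linear_combination (1 / 2 : ℝ) * sq_sqrt n.cast_nonneg

lemma integral_sq_max_enorm2_sub_le_four_mul_exp {ι : Type*} [Fintype ι] {τ : ℝ}
    (hτ : √(2 * Fintype.card ι) ≤ τ) :
    ∫ g, max (enorm2 g - τ) 0 ^ 2 ∂stdGaussian ι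
      ≤ 4 * exp (-(τ - √(Fintype.card ι)) ^ 2 / 2) := by
  set n := Fintype.card ι
  have hτ₀ : 0 ≤ τ := (sqrt_nonneg _).trans hτ
  rcases n.eq_zero_or_pos with hn | hn
  · have : IsEmpty ι := Fintype.card_eq_zero_iff.1 hn
    have hzero (g : ι → ℝ) : max (enorm2 g - τ) 0 ^ 2 = 0 := by
      simp [enorm2, hτ₀]
    simp only [hzero, integral_zero]
    positivity
  -- Chernoff parameter optimising `exp (-λ τ²) (1 - 2λ)^(-n/2)`, for which `1 - 2λ = n / τ²`.
  set lam := (1 - n / τ ^ 2) / 2 with hlam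
  have hτ_pos : 0 < τ := (sqrt_pos.2 (by positivity)).trans_le hτ
  have hτ_sq : 2 * (n : ℝ) ≤ τ ^ 2 := (sqrt_le_iff.1 hτ).2
  have hlam₁ : 1 / 4 ≤ lam := by
    have : (n : ℝ) / τ ^ 2 ≤ 1 / 2 := by rw [div_le_iff₀ (by positivity)]; linarith
    rw [hlam]; linarith
  have hlam₂ : lam < 1 / 2 := by
    have : 0 < (n : ℝ) / τ ^ 2 := by positivity
    rw [hlam]; linarith
  have hinv : (√(1 - 2 * lam))⁻¹ = τ / √n := by
    rw [show 1 - 2 * lam = n / τ ^ 2 by rw [hlam]; ring, sqrt_div n.cast_nonneg, sqrt_sq hτ₀,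
      inv_div]
  have hexp : -(lam * τ ^ 2) = -(τ ^ 2 - n) / 2 := by
    rw [hlam]
    field_simp
  calc ∫ g, max (enorm2 g - τ) 0 ^ 2 ∂stdGaussian ι
      ≤ 4 * exp (-(lam * τ ^ 2)) * (√(1 - 2 * lam))⁻¹ ^ n :=
        integral_sq_max_enorm2_sub_le hlam₁ hlam₂ hτ₀
    _ = 4 * ((τ / √n) ^ n * exp (-(τ ^ 2 - n) / 2)) := by rw [hinv, hexp]; ring
    _ ≤ 4 * exp (-(τ - √n) ^ 2 / 2) := by gcongr; exact div_sqrt_pow_mul_exp_le n hτ₀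

/-- expected squared positive excess of the Gaussian norm. -/
theorem gaussian_norm_excess :
    ∃ C : ℝ, 0 < C ∧
    ∀ (M : ℕ) (τ : ℝ), Real.sqrt (2 * M) ≤ τ →
    ∫ g, (max (enorm2 g - τ) 0) ^ 2 ∂(stdGaussian (Fin M))
      ≤ C * Real.exp (-(τ - Real.sqrt (2 * M)) ^ 2 / 2) := by
  refine ⟨4, by norm_num, fun M τ hτ => ?_⟩
  have hτ' : √(2 * Fintype.card (Fin M)) ≤ τ := by rwa [Fintype.card_fin]
  refine (integral_sq_max_enorm2_sub_le_four_mul_exp hτ').trans ?_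
  rw [Fintype.card_fin]
  have hsqrt : √(M : ℝ) ≤ √(2 * M) := sqrt_le_sqrt (by linarith [M.cast_nonneg (α := ℝ)])
  gcongr
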